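/- arXiv:2205.11724 — 2 statements merged into one kernel-verified Lean document; each statement's English description precedes it below -/
import Mathlib

section
/- If the polynomial ring R[x] is Nil*-Noetherian, then R is Nil*-Noetherian. -/
/-- A commutative ring is Nil*-Noetherian if every nil ideal is finitely generated. -/
def IsNilStarNoetherianRing (R : Type*) [CommRing R] : Prop :=
  ∀ I : Ideal R, I ≤ nilradical R → I.FG

/-!
`R` is a retract of `R[X]` via `C` and the constant coefficient. A nil ideal `I` of `R`
extends to the nil ideal `I R[X]`, which is finitely generated by hypothesis, and its image
under the retraction is `I` again.
-/

theorem Ideal.map_le_nilradical {R S : Type*} [CommRing R] [CommRing S] (f : R →+* S)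
    {I : Ideal R} (hI : I ≤ nilradical R) : I.map f ≤ nilradical S :=
  Ideal.map_le_iff_le_comap.mpr fun _ hx =>
    mem_nilradical.mpr ((mem_nilradical.mp (hI hx)).map f)

theorem Ideal.map_map_of_leftInverse {R S : Type*} [CommRing R] [CommRing S] (f : R →+* S)
    (g : S →+* R) (hgf : Function.LeftInverse g f) (I : Ideal R) : (I.map f).map g = I := by
  rw [Ideal.map_map, show g.comp f = RingHom.id R from RingHom.ext hgf, Ideal.map_id]

theorem IsNilStarNoetherianRing.of_leftInverse {R S : Type*} [CommRing R] [CommRing S]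
    (f : R →+* S) (g : S →+* R) (hgf : Function.LeftInverse g f)
    (hS : IsNilStarNoetherianRing S) : IsNilStarNoetherianRing R := fun I hI =>
  Ideal.map_map_of_leftInverse f g hgf I ▸ (hS _ (I.map_le_nilradical f hI)).map g

theorem isNilStarNoetherianRing_of_polynomial (R : Type*) [CommRing R]
    (h : IsNilStarNoetherianRing (Polynomial R)) : IsNilStarNoetherianRing R :=
  h.of_leftInverse Polynomial.C Polynomial.constantCoeff fun _ => Polynomial.coeff_C_zero
end

section
/- Let S = k[x₁, x₂, ...] be a polynomial ring in countably many variables over a field k, and R = S/⟨x₁xᵢ : i ≥ 1⟩. Then R is Nil*-Noetherian (its nilradical is the principal ideal generated by the image of x₁), but R is not Nil*-coherent, since the annihilator of the image of x₁ is not finitely generated. -/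
/-- A commutative ring is Nil*-coherent if every finitely generated nil ideal is
finitely presented. -/
def IsNilStarCoherentRing (R : Type*) [CommRing R] : Prop :=
  ∀ I : Ideal R, I ≤ nilradical R → I.FG → Module.FinitePresentation R I

/-- The ideal ⟨x₁xᵢ : i ≥ 1⟩ of k[x₁, x₂, ...] (variables indexed by ℕ). -/
noncomputable def relIdeal16 (k : Type*) [Field k] : Ideal (MvPolynomial ℕ k) :=
  Ideal.span (Set.range fun i : ℕ => MvPolynomial.X 0 * MvPolynomial.X i)

/-- The ring R = k[x₁, x₂, ...]/⟨x₁xᵢ : i ≥ 1⟩. -/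
abbrev Ring16 (k : Type*) [Field k] : Type _ := MvPolynomial ℕ k ⧸ relIdeal16 k

/-!
Write `g` for the image of `x₀` (the paper's `x₁`). The relations lie in the prime ideal `(x₀)`,
so `(g)` is a prime ideal of `R`; as `g² = 0` it is the nilradical. A product `x₀ f` is a
relation exactly when `f` has zero constant term, so `ann g` is the maximal ideal `(x₀, x₁, …)`
and `(g) ≅ R ⧸ ann g ≅ k` is a simple module: its only subideals are `0` and `(g)`.
On the other hand `ann g` maps onto the ideal of all variables of `k[x₀, x₁, …]` (set `x₀ = 0`),
which is not finitely generated, whereas `(g) ≅ R ⧸ ann g` finitely presented would force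
`ann g` to be finitely generated.
-/

open MvPolynomial

section SpanSingleton

variable {R M : Type*} [CommRing R] [AddCommGroup M] [Module R M]

theorem isSimpleModule_span_singleton_of_isMaximal {x : M}
    (h : (Ideal.torsionOf R M x).IsMaximal) : IsSimpleModule R (R ∙ x) :=
  isSimpleModule_iff_quot_maximal.mpr
    ⟨_, h, ⟨(Ideal.quotTorsionOfEquivSpanSingleton R M x).symm⟩⟩

theorem Module.FinitePresentation.fg_torsionOf (x : M)
    [Module.FinitePresentation R (R ∙ x)] : (Ideal.torsionOf R M x).FG := by
  have hfg := Module.FinitePresentation.fg_ker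
    ((Ideal.quotTorsionOfEquivSpanSingleton R M x).toLinearMap ∘ₗ (Ideal.torsionOf R M x).mkQ)
    ((Ideal.quotTorsionOfEquivSpanSingleton R M x).surjective.comp (Submodule.mkQ_surjective _))
  rwa [LinearEquiv.ker_comp, Submodule.ker_mkQ] at hfg

end SpanSingleton

section NilStar

variable {R : Type*} [CommRing R]

theorem isNilStarNoetherianRing_iff_isNoetherian_nilradical :
    IsNilStarNoetherianRing R ↔ IsNoetherian R (nilradical R) :=
  isNoetherian_submodule.symm

theorem nilradical_eq_span_singleton {g : R} (hg : IsNilpotent g)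
    [(Ideal.span {g}).IsPrime] : nilradical R = Ideal.span {g} :=
  le_antisymm (nilradical_le_prime _)
    ((Ideal.span_singleton_le_iff_mem _).mpr (mem_nilradical.mpr hg))

theorem not_isNilStarCoherentRing_of_not_fg_annihilator {g : R} (hg : IsNilpotent g)
    (h : ¬ (Ideal.span {g}).annihilator.FG) : ¬ IsNilStarCoherentRing R := by
  intro hcoh
  have := hcoh (Ideal.span {g})
    ((Ideal.span_singleton_le_iff_mem _).mpr (mem_nilradical.mpr hg)) ⟨{g}, by simp⟩
  have hfg := Module.FinitePresentation.fg_torsionOf (R := R) g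
  rw [← Ideal.annihilator_span_singleton_eq_torsionOf] at hfg
  exact h hfg

end NilStar

namespace MvPolynomial

variable {σ R : Type*} [CommRing R]

theorem idealOfVars_eq_ker_constantCoeff :
    idealOfVars σ R = RingHom.ker (constantCoeff (σ := σ) (R := R)) := by
  ext p
  rw [← pow_one (idealOfVars σ R), mem_pow_idealOfVars_iff', RingHom.mem_ker, constantCoeff_eq]
  constructor
  · exact fun h => h 0 (by simp)
  · intro h x hx
    rwa [(Finsupp.degree_eq_zero_iff x).mp (Nat.lt_one_iff.mp hx)]

theorem not_fg_idealOfVars [Infinite σ] [Nontrivial R] : ¬ (idealOfVars σ R).FG := by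
  intro hfg
  obtain ⟨s, hs, hspan⟩ := (Submodule.fg_span_iff_fg_span_finset_subset _).mp hfg
  obtain ⟨t, hts⟩ := Set.subset_range_iff_exists_image_eq.mp hs
  have ht : t.Finite :=
    Set.Finite.of_finite_image (by rw [hts]; exact s.finite_toSet) X_injective.injOn
  obtain ⟨j, hj⟩ := ht.exists_notMem
  have hXj : (X j : MvPolynomial σ R) ∈ Ideal.span (X '' t) := by
    rw [hts, Ideal.span, ← hspan]
    exact Ideal.subset_span ⟨j, rfl⟩
  obtain ⟨i, hi, hji⟩ := mem_ideal_span_X_image.mp hXj (Finsupp.single j 1) (by simp [support_X])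
  rw [Finsupp.single_apply_ne_zero] at hji
  exact hj (hji.1 ▸ hi)

instance isMaximal_idealOfVars {K : Type*} [Field K] : (idealOfVars σ K).IsMaximal := by
  rw [idealOfVars_eq_ker_constantCoeff]
  exact RingHom.ker_isMaximal_of_surjective _ fun a => ⟨C a, constantCoeff_C σ a⟩

theorem constantCoeff_killCompl {τ : Type*} {f : σ → τ} (hf : Function.Injective f)
    (p : MvPolynomial τ R) : constantCoeff (killCompl hf p) = constantCoeff p := by
  suffices h : constantCoeff.comp (killCompl hf).toRingHom = constantCoeff from
    RingHom.congr_fun h p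
  refine ringHom_ext (fun r => by simp) (fun i => ?_)
  by_cases hi : i ∈ Set.range f <;> simp [killCompl, hi]

end MvPolynomial

namespace Ring16

variable (k : Type*) [Field k]

theorem relIdeal16_eq_span_X_zero_mul_idealOfVars :
    relIdeal16 k = Ideal.span {X 0} * idealOfVars ℕ k := by
  rw [relIdeal16, idealOfVars, Ideal.span_mul_span', Set.singleton_mul, ← Set.range_comp]
  rfl

theorem relIdeal16_le_span_X_zero : relIdeal16 k ≤ Ideal.span {(X 0 : MvPolynomial ℕ k)} := by
  rw [relIdeal16_eq_span_X_zero_mul_idealOfVars]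
  exact Ideal.mul_le_left

variable {k}

/-- The relations lie in `(x₀, x₁, …)²`, while `x₀ * f` has the degree-one term `c • x₀`,
`c` the constant term of `f`. -/
theorem X_zero_mul_mem_relIdeal16_iff {f : MvPolynomial ℕ k} :
    X 0 * f ∈ relIdeal16 k ↔ constantCoeff f = 0 := by
  rw [relIdeal16_eq_span_X_zero_mul_idealOfVars]
  constructor
  · intro h
    have hle : Ideal.span {X 0} * idealOfVars ℕ k ≤ idealOfVars ℕ k ^ 2 := by
      rw [pow_two]
      exact Ideal.mul_mono_left
        ((Ideal.span_singleton_le_iff_mem _).mpr (Ideal.subset_span ⟨0, rfl⟩))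
    have := (mem_pow_idealOfVars_iff' 2 _).mp (hle h) (Finsupp.single 0 1 + 0) (by simp)
    rwa [coeff_X_mul, ← constantCoeff_eq] at this
  · intro h
    refine Ideal.mul_mem_mul (Ideal.mem_span_singleton_self _) ?_
    rwa [idealOfVars_eq_ker_constantCoeff, RingHom.mem_ker]

variable (k)

theorem isNilpotent_mk_X_zero : IsNilpotent (Ideal.Quotient.mk (relIdeal16 k) (X 0)) :=
  ⟨2, by rw [← map_pow, Ideal.Quotient.eq_zero_iff_mem, pow_two]; exact Ideal.subset_span ⟨0, rfl⟩⟩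

instance isPrime_span_mk_X_zero :
    (Ideal.span {Ideal.Quotient.mk (relIdeal16 k) (X 0)}).IsPrime := by
  have : (Ideal.span {(X 0 : MvPolynomial ℕ k)}).IsPrime :=
    (Ideal.span_singleton_prime (X_ne_zero _)).mpr X_prime
  have := Ideal.map_isPrime_of_surjective (Ideal.Quotient.mk_surjective (I := relIdeal16 k))
    (I := Ideal.span {(X 0 : MvPolynomial ℕ k)})
    (by rw [Ideal.mk_ker]; exact relIdeal16_le_span_X_zero k)
  rwa [Ideal.map_span, Set.image_singleton] at this

/-- Sets `x₀ = 0` and shifts `x_{i+1} ↦ x_i`, identifying `R ⧸ (x₀)` with `k[x₀, x₁, …]`. -/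
noncomputable def killXZero : Ring16 k →+* MvPolynomial ℕ k :=
  Ideal.Quotient.lift _ (killCompl Nat.succ_injective).toRingHom fun f hf => by
    have hX : killCompl Nat.succ_injective (X 0 : MvPolynomial ℕ k) = 0 := by simp [killCompl]
    obtain ⟨g, rfl⟩ := Ideal.mem_span_singleton'.mp (relIdeal16_le_span_X_zero k hf)
    simp [hX]

theorem killXZero_surjective : Function.Surjective (killXZero k) := fun p =>
  ⟨Ideal.Quotient.mk _ (rename Nat.succ p), killCompl_rename_app _ p⟩

theorem torsionOf_mk_X_zero :
    Ideal.torsionOf (Ring16 k) (Ring16 k) (Ideal.Quotient.mk (relIdeal16 k) (X 0)) =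
      (idealOfVars ℕ k).comap (killXZero k) := by
  ext r
  obtain ⟨f, rfl⟩ := Ideal.Quotient.mk_surjective r
  rw [Ideal.mem_torsionOf_iff, smul_eq_mul, ← map_mul, Ideal.Quotient.eq_zero_iff_mem, mul_comm,
    X_zero_mul_mem_relIdeal16_iff, Ideal.mem_comap, idealOfVars_eq_ker_constantCoeff,
    RingHom.mem_ker, killXZero, Ideal.Quotient.lift_mk, AlgHom.toRingHom_eq_coe, RingHom.coe_coe,
    constantCoeff_killCompl]

theorem isMaximal_torsionOf_mk_X_zero :
    (Ideal.torsionOf (Ring16 k) (Ring16 k) (Ideal.Quotient.mk (relIdeal16 k) (X 0))).IsMaximal := by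
  rw [torsionOf_mk_X_zero]
  exact Ideal.comap_isMaximal_of_surjective _ (killXZero_surjective k)

theorem not_fg_torsionOf_mk_X_zero :
    ¬ (Ideal.torsionOf (Ring16 k) (Ring16 k) (Ideal.Quotient.mk (relIdeal16 k) (X 0))).FG := by
  rw [torsionOf_mk_X_zero]
  intro hfg
  apply not_fg_idealOfVars (σ := ℕ) (R := k)
  rw [← Ideal.map_comap_of_surjective _ (killXZero_surjective k) (idealOfVars ℕ k)]
  exact hfg.map _

end Ring16

set_option synthInstance.maxHeartbeats 1000000 in
theorem example_nilStarNoetherian_not_nilStarCoherent (k : Type*) [Field k] :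
    nilradical (Ring16 k) =
      Ideal.span {Ideal.Quotient.mk (relIdeal16 k) (MvPolynomial.X 0)} ∧
    IsNilStarNoetherianRing (Ring16 k) ∧
    ¬ (Ideal.span {Ideal.Quotient.mk (relIdeal16 k) (MvPolynomial.X 0)}).annihilator.FG ∧
    ¬ IsNilStarCoherentRing (Ring16 k) := by
  have hg := Ring16.isNilpotent_mk_X_zero k
  have hnil := nilradical_eq_span_singleton hg
  have hann : ¬ (Ideal.span {Ideal.Quotient.mk (relIdeal16 k) (X 0)}).annihilator.FG := by
    rw [Ideal.annihilator_span_singleton_eq_torsionOf]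
    exact Ring16.not_fg_torsionOf_mk_X_zero k
  refine ⟨hnil, ?_, hann, not_isNilStarCoherentRing_of_not_fg_annihilator hg hann⟩
  rw [isNilStarNoetherianRing_iff_isNoetherian_nilradical, hnil]
  have := isSimpleModule_span_singleton_of_isMaximal (Ring16.isMaximal_torsionOf_mk_X_zero k)
  infer_instance
end
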